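/- For every base B, all formulas φ, ψ, χ, and each sign * ∈ {+,−}: if ⊩+_B φ∨ψ, φ;∅ ⊩*_B χ and ψ;∅ ⊩*_B χ, then ⊩*_B χ. -/

import Mathlib

/-- Signs: `pos` for proof/assertion, `neg` for refutation/rejection. -/
inductive Sign where
  | pos
  | neg
deriving DecidableEq

/-- The dual of a sign. -/
def Sign.dual : Sign → Sign
  | .pos => .neg
  | .neg => .pos

/-- Formulas of the bilateral logic 2Int. -/
inductive Form where
  | atom : ℕ → Form
  | bot : Form
  | top : Form
  | and : Form → Form → Form
  | or : Form → Form → Form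
  | imp : Form → Form → Form
  | coimp : Form → Form → Form
deriving DecidableEq

/-- A premise of an atomic rule: the sign required (proof or refutation), the premise atom,
and the sets of dischargeable atomic proof assumptions and refutation assumptions. -/
structure Premise where
  sign : Sign
  concl : ℕ
  dischargePf : Set ℕ
  dischargeRf : Set ℕ

/-- An atomic rule: a list of premises, a marking as proof (`pos`) or refutation (`neg`) rule,
and an atomic conclusion. -/
structure AtomicRule where
  prems : List Premise
  sign : Sign
  concl : ℕ

/-- A bilateral atomic system (base) is a set of atomic rules. -/
abbrev Base := Set AtomicRule

/-- `AtDeriv B s Γ Δ p` formalizes `Γ;Δ ⊢^s_B p`: there is a deduction in `B` of the atom `p`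
whose open atomic proof assumptions are contained in `Γ` and open atomic refutation
assumptions in `Δ`, consisting of a single assumption of sign `s` or ending with a rule of
sign `s`. -/
inductive AtDeriv (B : Base) : Sign → Set ℕ → Set ℕ → ℕ → Prop
  | hypPos {Γ Δ : Set ℕ} {p : ℕ} : p ∈ Γ → AtDeriv B .pos Γ Δ p
  | hypNeg {Γ Δ : Set ℕ} {p : ℕ} : p ∈ Δ → AtDeriv B .neg Γ Δ p
  | app {Γ Δ : Set ℕ} {R : AtomicRule} (hR : R ∈ B)
      (h : ∀ pr ∈ R.prems,
        AtDeriv B pr.sign (Γ ∪ pr.dischargePf) (Δ ∪ pr.dischargeRf) pr.concl) :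
      AtDeriv B R.sign Γ Δ R.concl

/-- Bilateral validity (support) `⊩^s_B φ`, by recursion on the formula. -/
def Supp : Form → Base → Sign → Prop
  | .atom p, B, s => AtDeriv B s ∅ ∅ p
  | .bot, B, .pos => ∀ p : ℕ, AtDeriv B .pos ∅ ∅ p ∧ AtDeriv B .neg ∅ ∅ p
  | .bot, _, .neg => True
  | .top, _, .pos => True
  | .top, B, .neg => ∀ p : ℕ, AtDeriv B .pos ∅ ∅ p ∧ AtDeriv B .neg ∅ ∅ p
  | .and φ ψ, B, .pos => Supp φ B .pos ∧ Supp ψ B .pos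
  | .and φ ψ, B, .neg => ∀ C : Base, B ⊆ C → ∀ p : ℕ,
      (((∀ D : Base, C ⊆ D → Supp φ D .neg → AtDeriv D .pos ∅ ∅ p) ∧
        (∀ D : Base, C ⊆ D → Supp ψ D .neg → AtDeriv D .pos ∅ ∅ p)) →
        AtDeriv C .pos ∅ ∅ p) ∧
      (((∀ D : Base, C ⊆ D → Supp φ D .neg → AtDeriv D .neg ∅ ∅ p) ∧
        (∀ D : Base, C ⊆ D → Supp ψ D .neg → AtDeriv D .neg ∅ ∅ p)) →
        AtDeriv C .neg ∅ ∅ p)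
  | .or φ ψ, B, .pos => ∀ C : Base, B ⊆ C → ∀ p : ℕ,
      (((∀ D : Base, C ⊆ D → Supp φ D .pos → AtDeriv D .pos ∅ ∅ p) ∧
        (∀ D : Base, C ⊆ D → Supp ψ D .pos → AtDeriv D .pos ∅ ∅ p)) →
        AtDeriv C .pos ∅ ∅ p) ∧
      (((∀ D : Base, C ⊆ D → Supp φ D .pos → AtDeriv D .neg ∅ ∅ p) ∧
        (∀ D : Base, C ⊆ D → Supp ψ D .pos → AtDeriv D .neg ∅ ∅ p)) →
        AtDeriv C .neg ∅ ∅ p)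
  | .or φ ψ, B, .neg => Supp φ B .neg ∧ Supp ψ B .neg
  | .imp φ ψ, B, .pos => ∀ C : Base, B ⊆ C → Supp φ C .pos → Supp ψ C .pos
  | .imp φ ψ, B, .neg => Supp φ B .pos ∧ Supp ψ B .neg
  | .coimp φ ψ, B, .pos => Supp φ B .pos ∧ Supp ψ B .neg
  | .coimp φ ψ, B, .neg => ∀ C : Base, B ⊆ C → Supp ψ C .neg → Supp φ C .neg

open Classical in
/-- `Cons B Γ Δ s χ` formalizes `Γ;Δ ⊩^s_B χ`. -/
def Cons (B : Base) (Γ Δ : Set Form) (s : Sign) (χ : Form) : Prop :=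
  if Γ = ∅ ∧ Δ = ∅ then Supp χ B s
  else ∀ C : Base, B ⊆ C →
    (∀ φ ∈ Γ, Supp φ C .pos) → (∀ ψ ∈ Δ, Supp ψ C .neg) → Supp χ C s


/-!
Induction on `χ`. Call a property of bases closed under `∨`-elimination on `φ ∨ ψ` if a base
supporting `φ ∨ ψ` has it whenever all extensions supporting `φ`, and all extensions supporting
`ψ`, have it. Atomic derivability is closed by the very clause defining `⊩⁺ φ ∨ ψ`, and
closedness survives conjunction, universal quantification, quantification over extensions and
implication with a monotone antecedent; every clause of support is built from these.
-/

theorem AtDeriv.mono {B C : Base} (hBC : B ⊆ C) {s : Sign} {Γ Δ : Set ℕ} {p : ℕ}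
    (h : AtDeriv B s Γ Δ p) : AtDeriv C s Γ Δ p := by
  induction h with
  | hypPos h => exact .hypPos h
  | hypNeg h => exact .hypNeg h
  | app hR _ ih => exact .app (hBC hR) ih

theorem monotone_forall_extension (R : Base → Prop) :
    Monotone fun B : Base => ∀ C : Base, B ⊆ C → R C :=
  fun _ _ hBC h D hD => h D (hBC.trans hD)

theorem Supp.monotone (χ : Form) (s : Sign) : Monotone fun B => Supp χ B s := by
  have atoms_both : Monotone fun B : Base =>
      ∀ p : ℕ, AtDeriv B .pos ∅ ∅ p ∧ AtDeriv B .neg ∅ ∅ p :=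
    fun _ _ hBC h p => ⟨(h p).1.mono hBC, (h p).2.mono hBC⟩
  induction χ generalizing s with
  | atom p => exact fun _ _ hBC => AtDeriv.mono hBC
  | bot =>
    cases s
    · exact atoms_both
    · exact fun _ _ _ _ => trivial
  | top =>
    cases s
    · exact fun _ _ _ _ => trivial
    · exact atoms_both
  | and a b iha ihb =>
    cases s
    · exact monotone_and (iha _) (ihb _)
    · exact monotone_forall_extension _
  | or a b iha ihb =>
    cases s
    · exact monotone_forall_extension _
    · exact monotone_and (iha _) (ihb _)
  | imp a b iha ihb =>
    cases s
    · exact monotone_forall_extension _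
    · exact monotone_and (iha _) (ihb _)
  | coimp a b iha ihb =>
    cases s
    · exact monotone_and (iha _) (ihb _)
    · exact monotone_forall_extension _

theorem cons_singleton_empty {B : Base} {φ χ : Form} {s : Sign} :
    Cons B {φ} ∅ s χ ↔ ∀ C : Base, B ⊆ C → Supp φ C .pos → Supp χ C s := by
  simp [Cons]

def AdmitsOrElim (φ ψ : Form) (P : Base → Prop) : Prop :=
  ∀ B : Base, Supp (φ.or ψ) B .pos →
    (∀ C : Base, B ⊆ C → Supp φ C .pos → P C) →
    (∀ C : Base, B ⊆ C → Supp ψ C .pos → P C) → P B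

namespace AdmitsOrElim

variable {φ ψ : Form}

theorem const_true : AdmitsOrElim φ ψ fun _ => True :=
  fun _ _ _ _ => trivial

theorem atDeriv (t : Sign) (p : ℕ) : AdmitsOrElim φ ψ fun B => AtDeriv B t ∅ ∅ p := by
  intro B hor h1 h2
  cases t
  · exact (hor B subset_rfl p).1 ⟨h1, h2⟩
  · exact (hor B subset_rfl p).2 ⟨h1, h2⟩

theorem and {P Q : Base → Prop} (hP : AdmitsOrElim φ ψ P) (hQ : AdmitsOrElim φ ψ Q) :
    AdmitsOrElim φ ψ fun B => P B ∧ Q B :=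
  fun B hor h1 h2 =>
    ⟨hP B hor (fun C hC h => (h1 C hC h).1) (fun C hC h => (h2 C hC h).1),
     hQ B hor (fun C hC h => (h1 C hC h).2) (fun C hC h => (h2 C hC h).2)⟩

theorem forall_ {ι : Sort*} {P : ι → Base → Prop} (hP : ∀ i, AdmitsOrElim φ ψ (P i)) :
    AdmitsOrElim φ ψ fun B => ∀ i, P i B :=
  fun B hor h1 h2 i => hP i B hor (fun C hC h => h1 C hC h i) (fun C hC h => h2 C hC h i)

theorem imp {Q P : Base → Prop} (hQ : Monotone Q) (hP : AdmitsOrElim φ ψ P) :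
    AdmitsOrElim φ ψ fun B => Q B → P B :=
  fun B hor h1 h2 hq =>
    hP B hor (fun C hC h => h1 C hC h (hQ hC hq)) (fun C hC h => h2 C hC h (hQ hC hq))

theorem forall_extension {R : Base → Prop} (hR : AdmitsOrElim φ ψ R) :
    AdmitsOrElim φ ψ fun B => ∀ C : Base, B ⊆ C → R C :=
  fun _ hor h1 h2 C hBC =>
    hR C (Supp.monotone _ _ hBC hor) (fun D hCD h => h1 D (hBC.trans hCD) h D subset_rfl)
      (fun D hCD h => h2 D (hBC.trans hCD) h D subset_rfl)

theorem supp (χ : Form) (s : Sign) : AdmitsOrElim φ ψ fun B => Supp χ B s := by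
  have atoms_both : AdmitsOrElim φ ψ fun B =>
      ∀ p : ℕ, AtDeriv B .pos ∅ ∅ p ∧ AtDeriv B .neg ∅ ∅ p :=
    .forall_ fun p => .and (.atDeriv .pos p) (.atDeriv .neg p)
  have hyp_mono : ∀ (Q Q' : Base → Prop),
      Monotone fun C => (∀ D, C ⊆ D → Q D) ∧ (∀ D, C ⊆ D → Q' D) :=
    fun Q Q' => monotone_and (monotone_forall_extension Q) (monotone_forall_extension Q')
  induction χ generalizing s with
  | atom p => exact .atDeriv s p
  | bot =>
    cases s
    · exact atoms_both
    · exact .const_true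
  | top =>
    cases s
    · exact .const_true
    · exact atoms_both
  | and a b iha ihb =>
    cases s
    · exact .and (iha _) (ihb _)
    · exact .forall_extension <| .forall_ fun p =>
        .and (.imp (hyp_mono _ _) (.atDeriv .pos p))
          (.imp (hyp_mono _ _) (.atDeriv .neg p))
  | or a b iha ihb =>
    cases s
    · exact .forall_extension <| .forall_ fun p =>
        .and (.imp (hyp_mono _ _) (.atDeriv .pos p))
          (.imp (hyp_mono _ _) (.atDeriv .neg p))
    · exact .and (iha _) (ihb _)
  | imp a b iha ihb =>
    cases s
    · exact .forall_extension (.imp (Supp.monotone a .pos) (ihb _))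
    · exact .and (iha _) (ihb _)
  | coimp a b iha ihb =>
    cases s
    · exact .and (iha _) (ihb _)
    · exact .forall_extension (.imp (Supp.monotone b .neg) (iha _))

end AdmitsOrElim

theorem disjunction_general (B : Base) (φ ψ χ : Form) (s : Sign)
    (hor : Supp (φ.or ψ) B .pos)
    (h1 : Cons B {φ} ∅ s χ) (h2 : Cons B {ψ} ∅ s χ) :
    Supp χ B s :=
  AdmitsOrElim.supp χ s B hor (cons_singleton_empty.mp h1) (cons_singleton_empty.mp h2)
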